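/- Let I be a polymatroidal ideal in R = K[x_1,...,x_n] with associated primes Ass(I) = {p_1,...,p_t} (each p_i a monomial prime, i.e., generated by variables). Then there exist integers a_i ≥ 0 such that I = ⋂_{i=1}^t p_i^{a_i}; that is, the p_i-primary components of I are powers of the p_i. -/

import Mathlib

noncomputable section
open MvPolynomial

variable (K : Type*) [Field K] (n : ℕ)

/-- Total degree of an exponent vector. -/
def expDeg (m : Fin n →₀ ℕ) : ℕ := m.sum fun _ e => e

/-- The minimal monomial generators of a monomial ideal, encoded by their
exponent vectors: monomials in `I` that are minimal under divisibility. -/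
def minGens (I : Ideal (MvPolynomial (Fin n) K)) : Set (Fin n →₀ ℕ) :=
  {m | (monomial m (1 : K)) ∈ I ∧
    ∀ m' : Fin n →₀ ℕ, (monomial m' (1 : K)) ∈ I → m' ≤ m → m' = m}

/-- A monomial ideal: an ideal generated by monomials. -/
def IsMonomialIdeal (I : Ideal (MvPolynomial (Fin n) K)) : Prop :=
  ∃ S : Set (Fin n →₀ ℕ), I = Ideal.span ((fun m => monomial m (1 : K)) '' S)

/-- A polymatroidal ideal of degree `d`: a monomial ideal all of whose minimal
generators have degree `d`, satisfying the exchange property. -/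
def IsPolymatroidal (I : Ideal (MvPolynomial (Fin n) K)) (d : ℕ) : Prop :=
  IsMonomialIdeal K n I ∧
  (∀ m ∈ minGens K n I, expDeg n m = d) ∧
  (∀ u ∈ minGens K n I, ∀ v ∈ minGens K n I, ∀ i : Fin n, v i < u i →
    ∃ j : Fin n, u j < v j ∧
      (u - Finsupp.single i 1 + Finsupp.single j 1) ∈ minGens K n I)

/-- A matroidal ideal: a squarefree polymatroidal ideal. -/
def IsMatroidal (I : Ideal (MvPolynomial (Fin n) K)) (d : ℕ) : Prop :=
  IsPolymatroidal K n I d ∧ ∀ m ∈ minGens K n I, ∀ i, m i ≤ 1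

/-- The support of a monomial ideal: variables dividing some minimal generator. -/
def suppI (I : Ideal (MvPolynomial (Fin n) K)) : Set (Fin n) :=
  {i | ∃ m ∈ minGens K n I, m i ≠ 0}

/-- The colon ideal `(I : x_i)`. -/
def colonVar (I : Ideal (MvPolynomial (Fin n) K)) (i : Fin n) :
    Ideal (MvPolynomial (Fin n) K) :=
  Submodule.colon I ((Ideal.span {X i} : Ideal (MvPolynomial (Fin n) K)) : Set (MvPolynomial (Fin n) K))

/-- The height of an ideal: infimum of heights of primes containing it. -/
def htIdeal (I : Ideal (MvPolynomial (Fin n) K)) : ℕ∞ :=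
  ⨅ (p : PrimeSpectrum (MvPolynomial (Fin n) K)) (_ : I ≤ p.asIdeal),
    Order.height p

/-- An ideal is unmixed if all associated primes of `R/I` have the same height. -/
def IsUnmixed (I : Ideal (MvPolynomial (Fin n) K)) : Prop :=
  ∀ p ∈ associatedPrimes (MvPolynomial (Fin n) K) (MvPolynomial (Fin n) K ⧸ I),
  ∀ q ∈ associatedPrimes (MvPolynomial (Fin n) K) (MvPolynomial (Fin n) K ⧸ I),
    htIdeal K n p = htIdeal K n q

/-- The graded maximal ideal `(x_1, …, x_n)`. -/
def maxIdeal : Ideal (MvPolynomial (Fin n) K) :=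
  Ideal.span (Set.range (X : Fin n → MvPolynomial (Fin n) K))

/-- The monomial prime ideal generated by the variables in `s`. -/
def primeOf (s : Finset (Fin n)) : Ideal (MvPolynomial (Fin n) K) :=
  Ideal.span ((fun i => (X i : MvPolynomial (Fin n) K)) '' s)

/-- The squarefree Veronese ideal of degree `d`. -/
def sqVeronese (d : ℕ) : Ideal (MvPolynomial (Fin n) K) :=
  Ideal.span {f | ∃ e : Finset (Fin n), e.card = d ∧ f = ∏ i ∈ e, X i}

/-- The variables belonging to an ideal (the variable generators of a
monomial prime). -/
def varsOf (p : Ideal (MvPolynomial (Fin n) K)) : Set (Fin n) :=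
  {i | (X i : MvPolynomial (Fin n) K) ∈ p}

/-- `I` is connected in codimension one: any two distinct minimal primes are
linked by a chain of minimal primes in which consecutive primes generate an
ideal on `height I + 1` variables. -/
def ConnCodimOne (I : Ideal (MvPolynomial (Fin n) K)) : Prop :=
  ∀ p ∈ I.minimalPrimes, ∀ q ∈ I.minimalPrimes, p ≠ q →
    ∃ (r : ℕ) (c : Fin (r + 1) → Ideal (MvPolynomial (Fin n) K)),
      (∀ i, c i ∈ I.minimalPrimes) ∧ c 0 = p ∧ c (Fin.last r) = q ∧
      ∀ i : Fin r,
        ((varsOf K n (c i.castSucc ⊔ c i.succ)).ncard : ℕ∞) = htIdeal K n I + 1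

/-- `R/I` is Cohen–Macaulay: there is a regular sequence on `R/I` inside the
graded maximal ideal whose length equals the Krull dimension of `R/I`. -/
def QuotientCM (I : Ideal (MvPolynomial (Fin n) K)) : Prop :=
  ∃ rs : List (MvPolynomial (Fin n) K),
    (∀ r ∈ rs, r ∈ maxIdeal K n) ∧
    RingTheory.Sequence.IsRegular (MvPolynomial (Fin n) K ⧸ I) rs ∧
    ((rs.length : ℕ∞) : WithBot ℕ∞) = ringKrullDim (MvPolynomial (Fin n) K ⧸ I)

/-!
Write `a_s` for the least `s`-degree `∑ j ∈ s, u j` of a minimal generator `u` of `I`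
(`minWeight`); the exponent of the associated prime `p_s = (x_j : j ∈ s)` is `a_s`, and
`I ⊆ ⋂ p_s ^ a_s` is clear. Conversely both sides are monomial ideals, so suppose `x^z` lies in
the intersection but not in `I`. Enlarge it to a monomial `x^y` that is maximal outside `I` in a
box `[z, B]` containing all minimal generators (they have degree `d`). Then `(I : x^y) = p_s` for
the set `s` of coordinates where `y` is below `B`, so `p_s` is associated and
`a_s ≤ ∑ j ∈ s, y j`. The exchange property then pushes a minimal generator of least `s`-degree
below `y` on `s`, and off `s` it is below `B = y` anyway, contradicting `x^y ∉ I`.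
-/

theorem Finsupp.sum_add_single_one_apply {σ : Type*} [DecidableEq σ] (s : Finset σ)
    (m : σ →₀ ℕ) (i : σ) :
    ∑ j ∈ s, (m + Finsupp.single i 1 : σ →₀ ℕ) j = ∑ j ∈ s, m j + if i ∈ s then 1 else 0 := by
  simp [Finset.sum_add_distrib, Finsupp.single_apply]

namespace MvPolynomial

variable {σ R : Type*}

theorem monomial_one_mem_of_le [CommSemiring R] {I : Ideal (MvPolynomial σ R)}
    {u w : σ →₀ ℕ} (h : monomial u (1 : R) ∈ I) (hle : u ≤ w) : monomial w (1 : R) ∈ I :=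
  I.mem_of_dvd (monomial_dvd_monomial.mpr ⟨Or.inr hle, dvd_rfl⟩) h

theorem mem_of_forall_monomial_one_mem [CommSemiring R] {I : Ideal (MvPolynomial σ R)}
    {f : MvPolynomial σ R} (h : ∀ w ∈ f.support, monomial w (1 : R) ∈ I) : f ∈ I := by
  rw [← support_sum_monomial_coeff f]
  refine Ideal.sum_mem _ fun w hw => ?_
  rw [← mul_one (coeff w f), ← C_mul_monomial]
  exact I.mul_mem_left _ (h w hw)

theorem span_X_image_pow [CommSemiring R] (s : Finset σ) (k : ℕ) :
    Ideal.span (X '' (s : Set σ) : Set (MvPolynomial σ R)) ^ k =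
      Ideal.span ((monomial · 1) '' {m | k ≤ ∑ i ∈ s, m i}) := by
  classical
  induction k with
  | zero =>
    rw [pow_zero, Ideal.one_eq_top, eq_comm, Ideal.eq_top_iff_one]
    exact Ideal.subset_span ⟨0, Nat.zero_le _, rfl⟩
  | succ k ih =>
    rw [pow_succ, ih, Ideal.span_mul_span']
    refine le_antisymm (Ideal.span_le.mpr ?_) (Ideal.span_le.mpr ?_)
    · rintro _ ⟨_, ⟨m, hm, rfl⟩, _, ⟨i, hi, rfl⟩, rfl⟩
      refine Ideal.subset_span ⟨m + Finsupp.single i 1, ?_, by simp [X, monomial_mul]⟩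
      have := Finsupp.sum_add_single_one_apply s m i
      simp only [Set.mem_ofPred_eq, if_pos (Finset.mem_coe.mp hi)] at hm this ⊢
      omega
    · rintro _ ⟨m, hm, rfl⟩
      obtain ⟨i, hi, hmi⟩ : ∃ i ∈ s, m i ≠ 0 := by
        by_contra! h
        simp only [Set.mem_ofPred_eq, Finset.sum_eq_zero h] at hm
        omega
      have hle : Finsupp.single i 1 ≤ m :=
        Finsupp.single_le_iff.mpr (Nat.one_le_iff_ne_zero.mpr hmi)
      refine Ideal.subset_span ⟨_, ⟨m - Finsupp.single i 1, ?_, rfl⟩, _, ⟨i, hi, rfl⟩,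
        by simp [X, monomial_mul, tsub_add_cancel_of_le hle]⟩
      have := Finsupp.sum_add_single_one_apply s (m - Finsupp.single i 1) i
      simp only [Set.mem_ofPred_eq, if_pos hi, tsub_add_cancel_of_le hle] at hm this ⊢
      omega

theorem mem_span_X_image_pow_iff [CommSemiring R] {s : Finset σ} {k : ℕ}
    {f : MvPolynomial σ R} :
    f ∈ Ideal.span (X '' (s : Set σ) : Set (MvPolynomial σ R)) ^ k ↔
      ∀ w ∈ f.support, k ≤ ∑ i ∈ s, w i := by
  rw [span_X_image_pow, mem_ideal_span_monomial_image]
  refine forall₂_congr fun w _ => ⟨fun ⟨m, hm, hmw⟩ => ?_, fun h => ⟨w, h, le_rfl⟩⟩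
  exact le_trans hm (Finset.sum_le_sum fun i _ => hmw i)

theorem isPrime_span_X_image [CommRing R] [IsDomain R] (s : Set σ) :
    (Ideal.span (X '' s : Set (MvPolynomial σ R))).IsPrime := by
  classical
  set P := Ideal.span (X '' s : Set (MvPolynomial σ R))
  let φ : MvPolynomial σ R →ₐ[R] MvPolynomial σ R := aeval fun i => if i ∈ s then 0 else X i
  have hφ : (Ideal.Quotient.mkₐ R P).comp φ = Ideal.Quotient.mkₐ R P := by
    refine algHom_ext fun i => ?_
    by_cases hi : i ∈ s
    · simp only [AlgHom.coe_comp, Function.comp_apply, aeval_X, hi, if_true, map_zero, φ]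
      rw [Ideal.Quotient.mkₐ_eq_mk, eq_comm, Ideal.Quotient.eq_zero_iff_mem]
      exact Ideal.subset_span ⟨i, hi, rfl⟩
    · simp [φ, hi]
  have hker : P = RingHom.ker φ := by
    refine le_antisymm (Ideal.span_le.mpr ?_) fun f hf => ?_
    · rintro _ ⟨i, hi, rfl⟩
      simp [φ, hi]
    · rw [← Ideal.Quotient.eq_zero_iff_mem, ← Ideal.Quotient.mkₐ_eq_mk R, ← hφ]
      simp [(RingHom.mem_ker).mp hf]
  rw [hker]
  exact RingHom.ker_isPrime _

end MvPolynomial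

theorem Ideal.mem_associatedPrimes_quotient_of_colon {R : Type*} [CommRing R] {I P : Ideal R}
    (hP : P.IsPrime) (x : R) (h : ∀ r, r * x ∈ I ↔ r ∈ P) : P ∈ associatedPrimes R (R ⧸ I) := by
  refine ⟨hP, Ideal.Quotient.mk I x, ?_⟩
  have hcolon : (⊥ : Submodule R (R ⧸ I)).colon {Ideal.Quotient.mk I x} = P := by
    ext r
    rw [Submodule.mem_colon_singleton, Submodule.mem_bot, Algebra.smul_def,
      Ideal.Quotient.algebraMap_eq, ← map_mul, Ideal.Quotient.eq_zero_iff_mem, h]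
  rw [hcolon, hP.radical]

section Exchange

variable {σ : Type*}

def HasExchangeProperty (G : Set (σ →₀ ℕ)) : Prop :=
  ∀ u ∈ G, ∀ v ∈ G, ∀ i : σ, v i < u i →
    ∃ j : σ, u j < v j ∧ (u - Finsupp.single i 1 + Finsupp.single j 1) ∈ G

variable {G : Set (σ →₀ ℕ)}

theorem HasExchangeProperty.exists_exchange_of_le_add_single [DecidableEq σ]
    (hG : HasExchangeProperty G) {u w c : σ →₀ ℕ} (hu : u ∈ G) (hw : w ∈ G) {i k : σ}
    (hi : c i < u i) (hk : u k < c k) (hwc : w ≤ c + Finsupp.single k 1) :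
    ∃ j, u j < c j ∧ u - Finsupp.single i 1 + Finsupp.single j 1 ∈ G := by
  have hwc' : ∀ t, w t ≤ c t + if k = t then 1 else 0 := fun t => by
    simpa [Finsupp.single_apply] using hwc t
  have hwi : w i < u i := by
    have := hwc' i
    split_ifs at this with hki
    · subst hki; omega
    · omega
  obtain ⟨j, hj, hjG⟩ := hG u hu w hw i hwi
  refine ⟨j, ?_, hjG⟩
  have := hwc' j
  split_ifs at this with hkj
  · subst hkj; exact hk
  · omega

/-- Among the elements of `G` of `s`-weight at most that of `c`, one of minimal excess
`∑ j ∈ s, (u j - c j)` over `c` has excess zero: otherwise an exchange lowers it. -/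
theorem HasExchangeProperty.exists_le_on (hG : HasExchangeProperty G) (s : Finset σ)
    (c : σ →₀ ℕ) (hc : ∀ k ∈ s, ∃ w ∈ G, w ≤ c + Finsupp.single k 1)
    (h₀ : ∃ u ∈ G, ∑ j ∈ s, u j ≤ ∑ j ∈ s, c j) :
    ∃ u ∈ G, ∀ j ∈ s, u j ≤ c j := by
  classical
  obtain ⟨u, ⟨hu, hus⟩, hmin⟩ := (measure fun u : σ →₀ ℕ => ∑ j ∈ s, (u - c) j).wf.has_min
    {u | u ∈ G ∧ ∑ j ∈ s, u j ≤ ∑ j ∈ s, c j} h₀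
  refine ⟨u, hu, fun i hi => ?_⟩
  by_contra! hci
  obtain ⟨k, hk, huk⟩ : ∃ k ∈ s, u k < c k := by
    by_contra! h
    exact (Finset.sum_lt_sum h ⟨i, hi, hci⟩).not_ge hus
  obtain ⟨w, hw, hwc⟩ := hc k hk
  obtain ⟨j, huj, hu'⟩ := hG.exists_exchange_of_le_add_single hu hw hci huk hwc
  set u' := u - Finsupp.single i 1 + Finsupp.single j 1
  have hle : Finsupp.single i 1 ≤ u := Finsupp.single_le_iff.mpr (by omega)
  have hsum : u' + Finsupp.single i 1 = u + Finsupp.single j 1 := by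
    rw [add_right_comm, tsub_add_cancel_of_le hle]
  have hexcess : u' - c + Finsupp.single i 1 = u - c := by
    ext t
    simp only [u', Finsupp.coe_add, Finsupp.coe_tsub, Pi.add_apply, Pi.sub_apply,
      Finsupp.single_apply]
    split_ifs <;> subst_vars <;> omega
  refine hmin u' ⟨hu', ?_⟩ ?_
  · have h1 := congrArg (fun v : σ →₀ ℕ => ∑ t ∈ s, v t) hsum
    simp only [Finsupp.sum_add_single_one_apply, if_pos hi] at h1
    split_ifs at h1 <;> omega
  · have h1 := congrArg (fun v : σ →₀ ℕ => ∑ t ∈ s, v t) hexcess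
    simp only [Finsupp.sum_add_single_one_apply, if_pos hi] at h1
    show ∑ t ∈ s, (u' - c) t < ∑ t ∈ s, (u - c) t
    omega

end Exchange

section MonomialIdeals

variable {K n}

theorem exists_mem_minGens_le {I : Ideal (MvPolynomial (Fin n) K)} {m : Fin n →₀ ℕ}
    (h : monomial m (1 : K) ∈ I) : ∃ u ∈ minGens K n I, u ≤ m := by
  obtain ⟨u, ⟨hu, hum⟩, hmin⟩ :=
    wellFounded_lt.has_min {u | monomial u (1 : K) ∈ I ∧ u ≤ m} ⟨m, h, le_rfl⟩
  exact ⟨u, ⟨hu, fun v hv hvu => eq_of_le_of_not_lt hvu (hmin v ⟨hv, hvu.trans hum⟩)⟩, hum⟩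

theorem IsMonomialIdeal.monomial_mem_of_mem_support {I : Ideal (MvPolynomial (Fin n) K)}
    (hI : IsMonomialIdeal K n I) {f : MvPolynomial (Fin n) K} (hf : f ∈ I) {w : Fin n →₀ ℕ}
    (hw : w ∈ f.support) : monomial w (1 : K) ∈ I := by
  obtain ⟨S, rfl⟩ := hI
  obtain ⟨m, hm, hmw⟩ := mem_ideal_span_monomial_image.mp hf w hw
  exact monomial_one_mem_of_le (Ideal.subset_span ⟨m, hm, rfl⟩) hmw

theorem IsMonomialIdeal.minGens_nonempty {I : Ideal (MvPolynomial (Fin n) K)}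
    (hI : IsMonomialIdeal K n I) (h : I ≠ ⊥) : (minGens K n I).Nonempty := by
  obtain ⟨f, hf, hf0⟩ := Submodule.exists_mem_ne_zero_of_ne_bot h
  obtain ⟨w, hw⟩ := support_nonempty.mpr hf0
  obtain ⟨u, hu, -⟩ := exists_mem_minGens_le (hI.monomial_mem_of_mem_support hf hw)
  exact ⟨u, hu⟩

theorem IsPolymatroidal.hasExchangeProperty {I : Ideal (MvPolynomial (Fin n) K)} {d : ℕ}
    (hI : IsPolymatroidal K n I d) : HasExchangeProperty (minGens K n I) :=
  hI.2.2

theorem IsPolymatroidal.apply_le_of_mem_minGens {I : Ideal (MvPolynomial (Fin n) K)} {d : ℕ}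
    (hI : IsPolymatroidal K n I d) {u : Fin n →₀ ℕ} (hu : u ∈ minGens K n I) (i : Fin n) :
    u i ≤ d :=
  (Finsupp.le_degree i u).trans_eq (hI.2.1 u hu)

variable (K n) in
def minWeight (I : Ideal (MvPolynomial (Fin n) K)) (s : Finset (Fin n)) : ℕ :=
  sInf ((fun u => ∑ j ∈ s, u j) '' minGens K n I)

theorem minWeight_le {I : Ideal (MvPolynomial (Fin n) K)} {s : Finset (Fin n)}
    {u : Fin n →₀ ℕ} (hu : u ∈ minGens K n I) : minWeight K n I s ≤ ∑ j ∈ s, u j :=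
  Nat.sInf_le ⟨u, hu, rfl⟩

theorem exists_mem_minGens_sum_eq_minWeight {I : Ideal (MvPolynomial (Fin n) K)}
    (hG : (minGens K n I).Nonempty) (s : Finset (Fin n)) :
    ∃ u ∈ minGens K n I, ∑ j ∈ s, u j = minWeight K n I s :=
  Nat.sInf_mem (hG.image _)

theorem X_mem_primeOf_iff {s : Finset (Fin n)} {i : Fin n} :
    (X i : MvPolynomial (Fin n) K) ∈ primeOf K n s ↔ i ∈ s := by
  classical
  simp [primeOf, mem_ideal_span_X_image, support_X, Finsupp.single_apply]

theorem primeOf_isPrime (s : Finset (Fin n)) : (primeOf K n s).IsPrime :=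
  isPrime_span_X_image _

theorem mem_primeOf_pow_iff {s : Finset (Fin n)} {k : ℕ} {f : MvPolynomial (Fin n) K} :
    f ∈ primeOf K n s ^ k ↔ ∀ w ∈ f.support, k ≤ ∑ j ∈ s, w j :=
  mem_span_X_image_pow_iff

theorem IsMonomialIdeal.le_primeOf_pow_minWeight {I : Ideal (MvPolynomial (Fin n) K)}
    (hI : IsMonomialIdeal K n I) (s : Finset (Fin n)) :
    I ≤ primeOf K n s ^ minWeight K n I s := fun f hf =>
  mem_primeOf_pow_iff.mpr fun w hw => by
    obtain ⟨u, hu, huw⟩ := exists_mem_minGens_le (hI.monomial_mem_of_mem_support hf hw)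
    exact (minWeight_le hu).trans (Finset.sum_le_sum fun j _ => huw j)

end MonomialIdeals

section Polymatroidal

variable {K n}

theorem IsMonomialIdeal.mul_monomial_mem_iff {I : Ideal (MvPolynomial (Fin n) K)}
    (hI : IsMonomialIdeal K n I) {z B : Fin n →₀ ℕ} (hB : ∀ u ∈ minGens K n I, u ≤ B)
    (hz : monomial z (1 : K) ∉ I)
    (hmax : ∀ i, z i < B i → monomial (z + Finsupp.single i 1) (1 : K) ∈ I)
    (r : MvPolynomial (Fin n) K) :
    r * monomial z 1 ∈ I ↔ r ∈ primeOf K n {i | z i < B i} := by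
  constructor
  · intro hr
    refine mem_ideal_span_X_image.mpr fun m hm => ?_
    by_contra! hm0
    have hmz : m + z ∈ (r * monomial z 1).support := by
      rw [mem_support_iff, coeff_mul_monomial, mul_one]
      exact mem_support_iff.mp hm
    obtain ⟨u, hu, hle⟩ := exists_mem_minGens_le (hI.monomial_mem_of_mem_support hr hmz)
    refine hz (monomial_one_mem_of_le hu.1 fun i => ?_)
    by_cases hi : z i < B i
    · simpa [hm0 i (by simpa using hi)] using hle i
    · exact (hB u hu i).trans (not_lt.mp hi)
  · intro hr
    have hle : primeOf K n {i | z i < B i} ≤ I.colon {monomial z 1} := by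
      refine Ideal.span_le.mpr ?_
      rintro _ ⟨i, hi, rfl⟩
      have hzi := hmax i (by simpa using hi)
      rw [add_comm, monomial_single_add, pow_one] at hzi
      exact Submodule.mem_colon_singleton.mpr hzi
    simpa [Submodule.mem_colon_singleton] using hle hr

theorem IsPolymatroidal.exists_sum_lt_minWeight {I : Ideal (MvPolynomial (Fin n) K)} {d : ℕ}
    (hI : IsPolymatroidal K n I d) (hG : (minGens K n I).Nonempty) {z B : Fin n →₀ ℕ}
    (hB : ∀ u ∈ minGens K n I, u ≤ B) (hz : monomial z (1 : K) ∉ I)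
    (hmax : ∀ i, z i < B i → monomial (z + Finsupp.single i 1) (1 : K) ∈ I) :
    ∃ s, primeOf K n s ∈
        associatedPrimes (MvPolynomial (Fin n) K) (MvPolynomial (Fin n) K ⧸ I) ∧
      ∑ j ∈ s, z j < minWeight K n I s := by
  classical
  set s : Finset (Fin n) := {i | z i < B i}
  refine ⟨s, Ideal.mem_associatedPrimes_quotient_of_colon (primeOf_isPrime s) _
    (hI.1.mul_monomial_mem_iff hB hz hmax), ?_⟩
  by_contra! hle
  obtain ⟨u₀, hu₀, hu₀s⟩ := exists_mem_minGens_sum_eq_minWeight hG s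
  have hwit : ∀ k ∈ s, ∃ w ∈ minGens K n I, w ≤ z + Finsupp.single k 1 := fun k hk =>
    exists_mem_minGens_le (hmax k (by simpa [s] using hk))
  obtain ⟨u, hu, hus⟩ := hI.hasExchangeProperty.exists_le_on s z hwit ⟨u₀, hu₀, hu₀s ▸ hle⟩
  refine hz (monomial_one_mem_of_le hu.1 fun i => ?_)
  by_cases hi : z i < B i
  · exact hus i (by simpa [s] using hi)
  · exact (hB u hu i).trans (not_lt.mp hi)

theorem IsPolymatroidal.monomial_mem_of_minWeight_le {I : Ideal (MvPolynomial (Fin n) K)}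
    {d : ℕ} (hI : IsPolymatroidal K n I d) (hG : (minGens K n I).Nonempty) (z : Fin n →₀ ℕ)
    (hz : ∀ s, primeOf K n s ∈
        associatedPrimes (MvPolynomial (Fin n) K) (MvPolynomial (Fin n) K ⧸ I) →
      minWeight K n I s ≤ ∑ j ∈ s, z j) :
    monomial z (1 : K) ∈ I := by
  by_contra hzI
  set B : Fin n →₀ ℕ := z + Finsupp.equivFunOnFinite.symm fun _ => d
  have hB : ∀ u ∈ minGens K n I, u ≤ B := fun u hu i => by
    simpa [B] using (hI.apply_le_of_mem_minGens hu i).trans (Nat.le_add_left d (z i))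
  obtain ⟨y, ⟨⟨hzy, hyB⟩, hyI⟩, hymax⟩ :=
    (((Set.finite_Icc z B).subset Set.inter_subset_left).exists_maximal
      ⟨z, ⟨le_rfl, le_self_add⟩, hzI⟩ :
      ∃ y, Maximal (· ∈ Set.Icc z B ∩ {y | monomial y (1 : K) ∉ I}) y)
  have hymax' : ∀ i, y i < B i → monomial (y + Finsupp.single i 1) (1 : K) ∈ I := by
    intro i hi
    by_contra hyi
    have hmem : y + Finsupp.single i 1 ∈ Set.Icc z B ∩ {y | monomial y (1 : K) ∉ I} := by
      refine ⟨⟨hzy.trans le_self_add, fun t => ?_⟩, hyi⟩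
      by_cases hti : t = i
      · subst hti; simpa using hi
      · simpa [Finsupp.single_apply, Ne.symm hti] using hyB t
    have := hymax hmem le_self_add i
    simp at this
  obtain ⟨s, hs, hlt⟩ := hI.exists_sum_lt_minWeight hG hB hyI hymax'
  exact (hz s hs).not_gt ((Finset.sum_le_sum fun j _ => hzy j).trans_lt hlt)

end Polymatroidal

theorem stmt10_general {K : Type*} [Field K] {n : ℕ}
    (I : Ideal (MvPolynomial (Fin n) K)) (d : ℕ) (hI : IsPolymatroidal K n I d)
    (hmono : ∀ p ∈ associatedPrimes (MvPolynomial (Fin n) K)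
        (MvPolynomial (Fin n) K ⧸ I),
      ∃ s : Finset (Fin n), p = primeOf K n s) :
    ∃ a : Ideal (MvPolynomial (Fin n) K) → ℕ,
      I = ⨅ p ∈ associatedPrimes (MvPolynomial (Fin n) K)
        (MvPolynomial (Fin n) K ⧸ I), p ^ a p := by
  classical
  rcases eq_or_ne I ⊥ with rfl | hI0
  · refine ⟨fun _ => 1, ?_⟩
    rw [associatedPrimes.eq_singleton_of_isPrimary Ideal.isPrime_bot.isPrimary,
      Ideal.radical_bot_of_isReduced]
    simp
  have hG := hI.1.minGens_nonempty hI0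
  have hvars (s : Finset (Fin n)) : ({i | X i ∈ primeOf K n s} : Finset (Fin n)) = s := by
    ext i
    simp [X_mem_primeOf_iff]
  refine ⟨fun p => minWeight K n I {i | X i ∈ p}, le_antisymm ?_ fun f hf => ?_⟩
  · refine le_iInf₂ fun p hp => ?_
    obtain ⟨s, rfl⟩ := hmono p hp
    simpa only [hvars] using hI.1.le_primeOf_pow_minWeight s
  · refine mem_of_forall_monomial_one_mem fun w hw => hI.monomial_mem_of_minWeight_le hG w ?_
    intro s hs
    have hfs := (Submodule.mem_iInf _).mp ((Submodule.mem_iInf _).mp hf _) hs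
    simp only [hvars, mem_primeOf_pow_iff] at hfs
    exact hfs w hw

/-- Herzog–Vladoiu: For a polymatroidal ideal `I` whose associated
primes are monomial primes, the primary components are powers of the associated
primes: `I = ⋂ p_i^{a_i}`. -/
theorem stmt10 {K : Type*} [Field K] {n : ℕ} (hn : 0 < n)
    (I : Ideal (MvPolynomial (Fin n) K)) (d : ℕ) (hI : IsPolymatroidal K n I d)
    (hmono : ∀ p ∈ associatedPrimes (MvPolynomial (Fin n) K)
        (MvPolynomial (Fin n) K ⧸ I),
      ∃ s : Finset (Fin n), p = primeOf K n s) :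
    ∃ a : Ideal (MvPolynomial (Fin n) K) → ℕ,
      I = ⨅ p ∈ associatedPrimes (MvPolynomial (Fin n) K)
        (MvPolynomial (Fin n) K ⧸ I), p ^ a p :=
  stmt10_general I d hI hmono
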